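/- arXiv:1708.05881 — 3 statements merged into one kernel-verified Lean document; each statement's English description precedes it below -/
import Mathlib

section
/- If Ω: TM → V is a virtual immersion, then its second fundamental form II is symmetric (II(X,Y) = II(Y,X) for all X,Y) if and only if dΩ = 0. -/
/-
Condition (b) says exactly that `dΩ(X,Y)` is normal. Since `Ω [X,Y]` is tangential, the normal
part of `D_X (Ω Y) - D_Y (Ω X)` is therefore `dΩ(X,Y)` itself, and that normal part is
`II(X,Y) - II(Y,X)`.
-/

/-
Algebraic (Koszul-style) model of a Riemannian manifold `(M,g)` equipped with a
virtual immersion `Ω : TM → V`: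
* `C` is the ring of smooth functions on `M`,
* `VF` is the `C`-module of vector fields on `M`, with Lie `bracket` and
  derivation action `act : VF → C → C`,
* `g : VF → VF → C` is the Riemannian metric,
* `V` is the `C`-module of sections of the trivial bundle `M × V`, with the
  (pointwise) inner product `ip : V → V → C`,
* `Ω : VF →ₗ[C] V` is the virtual immersion (a `V`-valued one-form),
* `D : VF → V → V` is the flat connection on `M × V`,
* `tang : V →ₗ[C] VF` is the tangential part: it is characterized by
  `ip v (Ω Z) = g (tang v) Z`, so `Ω (tang v)` is the orthogonal projection of
  `v` onto `Ω(TM)` and `v - Ω (tang v)` is the normal part of `v`.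
-/

variable {C : Type*} [CommRing C]
variable {VF : Type*} [AddCommGroup VF] [Module C VF]
variable {V : Type*} [AddCommGroup V] [Module C V]

/-- The tangential connection `D^T_X Y = (D_X (Ω Y))^T`, viewed as a vector field. -/
def DT (Ω : VF →ₗ[C] V) (D : VF → V → V) (tang : V →ₗ[C] VF) (X Y : VF) : VF :=
  tang (D X (Ω Y))

/-- The second fundamental form `II(X,Y) = (D_X (Ω Y))^⊥`. -/
def II (Ω : VF →ₗ[C] V) (D : VF → V → V) (tang : V →ₗ[C] VF) (X Y : VF) : V :=
  D X (Ω Y) - Ω (tang (D X (Ω Y)))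

/-- The shape operator `S_η(X) = -(D_X η)^T`. -/
def Shape (D : VF → V → V) (tang : V →ₗ[C] VF) (η : V) (X : VF) : VF :=
  - tang (D X η)

/-- The curvature tensor `R(X,Y)Z = ∇_Y ∇_X Z - ∇_X ∇_Y Z + ∇_{[X,Y]} Z`,
where `∇ = D^T` is the Levi-Civita connection of `g` (valid for a virtual
immersion). -/
def Rcurv (Ω : VF →ₗ[C] V) (D : VF → V → V) (tang : V →ₗ[C] VF)
    (bracket : VF → VF → VF) (X Y Z : VF) : VF :=
  DT Ω D tang Y (DT Ω D tang X Z) - DT Ω D tang X (DT Ω D tang Y Z)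
    + DT Ω D tang (bracket X Y) Z

/-- The normal connection `D^⊥_X η = (D_X η)^⊥`. -/
def Dperp (Ω : VF →ₗ[C] V) (D : VF → V → V) (tang : V →ₗ[C] VF) (X : VF) (η : V) : V :=
  D X η - Ω (tang (D X η))

/-- The curvature of the normal connection (same sign convention as `Rcurv`). -/
def Rperp (Ω : VF →ₗ[C] V) (D : VF → V → V) (tang : V →ₗ[C] VF)
    (bracket : VF → VF → VF) (X Y : VF) (η : V) : V :=
  Dperp Ω D tang Y (Dperp Ω D tang X η) - Dperp Ω D tang X (Dperp Ω D tang Y η)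
    + Dperp Ω D tang (bracket X Y) η

/-- The covariant derivative of the second fundamental form,
`(D_X II)(Y,Z) = D_X (II(Y,Z)) - II(∇_X Y, Z) - II(Y, ∇_X Z)`. -/
def DII (Ω : VF →ₗ[C] V) (D : VF → V → V) (tang : V →ₗ[C] VF) (X Y Z : VF) : V :=
  D X (II Ω D tang Y Z) - II Ω D tang (DT Ω D tang X Y) Z
    - II Ω D tang Y (DT Ω D tang X Z)

/-- The paper's `dΩ`: the exterior covariant derivative of `Ω` for the flat connection `D`. -/
def covExtDeriv (Ω : VF →ₗ[C] V) (D : VF → V → V) (bracket : VF → VF → VF) (X Y : VF) : V :=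
  D X (Ω Y) - D Y (Ω X) - Ω (bracket X Y)

section

variable {g : VF → VF → C} {ip : V → V → C} {Ω : VF →ₗ[C] V} {tang : V →ₗ[C] VF}

theorem tang_eq_zero_of_ip_eq_zero (h_g_nondeg : ∀ X, (∀ Y, g X Y = 0) → X = 0)
    (h_tang : ∀ v Z, ip v (Ω Z) = g (tang v) Z) {v : V} (hv : ∀ Z, ip v (Ω Z) = 0) :
    tang v = 0 :=
  h_g_nondeg _ fun Z => h_tang v Z ▸ hv Z

theorem tang_Ω_apply (h_g_addl : ∀ X X' Y, g (X + X') Y = g X Y + g X' Y)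
    (h_g_nondeg : ∀ X, (∀ Y, g X Y = 0) → X = 0)
    (h_tang : ∀ v Z, ip v (Ω Z) = g (tang v) Z) (ha : ∀ X Y, ip (Ω X) (Ω Y) = g X Y)
    (W : VF) : tang (Ω W) = W := by
  refine sub_eq_zero.mp (h_g_nondeg _ fun Z => ?_)
  calc g (tang (Ω W) - W) Z = g (tang (Ω W)) Z - g W Z :=
        (AddMonoidHom.mk' (g · Z) (h_g_addl · · Z)).map_sub _ _
    _ = 0 := by rw [← h_tang, ha, sub_self]

theorem II_sub_II_swap {D : VF → V → V} {bracket : VF → VF → VF}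
    (hΩ : ∀ W, tang (Ω W) = W) (X Y : VF) :
    II Ω D tang X Y - II Ω D tang Y X =
      covExtDeriv Ω D bracket X Y - Ω (tang (covExtDeriv Ω D bracket X Y)) := by
  simp only [II, covExtDeriv, map_sub, hΩ]
  abel

end

theorem stmt1_general
    (bracket : VF → VF → VF) (g : VF → VF → C) (ip : V → V → C)
    (Ω : VF →ₗ[C] V) (D : VF → V → V) (tang : V →ₗ[C] VF)
    (h_g_addl : ∀ X X' Y, g (X + X') Y = g X Y + g X' Y)
    (h_g_nondeg : ∀ X, (∀ Y, g X Y = 0) → X = 0)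
    (h_tang : ∀ v Z, ip v (Ω Z) = g (tang v) Z)
    (ha : ∀ X Y, ip (Ω X) (Ω Y) = g X Y)
    (hb : ∀ X Y Z, ip (D X (Ω Y) - D Y (Ω X) - Ω (bracket X Y)) (Ω Z) = 0) :
    (∀ X Y, II Ω D tang X Y = II Ω D tang Y X) ↔
      (∀ X Y, D X (Ω Y) - D Y (Ω X) - Ω (bracket X Y) = 0) := by
  have hΩ := tang_Ω_apply h_g_addl h_g_nondeg h_tang ha
  have hdΩ_normal X Y : tang (covExtDeriv Ω D bracket X Y) = 0 :=
    tang_eq_zero_of_ip_eq_zero h_g_nondeg h_tang (hb X Y)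
  have hII_sub X Y : II Ω D tang X Y - II Ω D tang Y X = covExtDeriv Ω D bracket X Y := by
    rw [II_sub_II_swap hΩ, hdΩ_normal, map_zero, sub_zero]
  exact forall₂_congr fun X Y => by rw [← sub_eq_zero, hII_sub, covExtDeriv]

/-- for a virtual immersion `Ω`, the second fundamental form is
symmetric if and only if `dΩ = 0`, where
`dΩ(X,Y) = D_X (Ω Y) - D_Y (Ω X) - Ω [X,Y]`. -/
theorem stmt1
    (act : VF → C → C) (bracket : VF → VF → VF) (g : VF → VF → C) (ip : V → V → C)
    (Ω : VF →ₗ[C] V) (D : VF → V → V) (tang : V →ₗ[C] VF)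
    (h_act_add : ∀ X (f f' : C), act X (f + f') = act X f + act X f')
    (h_act_mul : ∀ X (f f' : C), act X (f * f') = f * act X f' + f' * act X f)
    (h_br_skew : ∀ X Y, bracket X Y = - bracket Y X)
    (h_br_leib : ∀ X (f : C) Y, bracket X (f • Y) = act X f • Y + f • bracket X Y)
    (h_g_symm : ∀ X Y, g X Y = g Y X)
    (h_g_addl : ∀ X X' Y, g (X + X') Y = g X Y + g X' Y)
    (h_g_smull : ∀ (f : C) X Y, g (f • X) Y = f * g X Y)
    (h_g_nondeg : ∀ X, (∀ Y, g X Y = 0) → X = 0)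
    (h_ip_symm : ∀ u v, ip u v = ip v u)
    (h_ip_addl : ∀ u u' v, ip (u + u') v = ip u v + ip u' v)
    (h_ip_smull : ∀ (f : C) u v, ip (f • u) v = f * ip u v)
    (hD_addX : ∀ X X' v, D (X + X') v = D X v + D X' v)
    (hD_smulX : ∀ (f : C) X v, D (f • X) v = f • D X v)
    (hD_addv : ∀ X u v, D X (u + v) = D X u + D X v)
    (hD_leib : ∀ X (f : C) v, D X (f • v) = act X f • v + f • D X v)
    (hD_flat : ∀ X Y v, D X (D Y v) - D Y (D X v) = D (bracket X Y) v)
    (hD_ip : ∀ X u v, act X (ip u v) = ip (D X u) v + ip u (D X v))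
    (h_tang : ∀ v Z, ip v (Ω Z) = g (tang v) Z)
    (ha : ∀ X Y, ip (Ω X) (Ω Y) = g X Y)
    (hb : ∀ X Y Z, ip (D X (Ω Y) - D Y (Ω X) - Ω (bracket X Y)) (Ω Z) = 0) :
    (∀ X Y, II Ω D tang X Y = II Ω D tang Y X) ↔
      (∀ X Y, D X (Ω Y) - D Y (Ω X) - Ω (bracket X Y) = 0) :=
  stmt1_general bracket g ip Ω D tang h_g_addl h_g_nondeg h_tang ha hb
end

section
/- Let Ω: TM → V be a virtual immersion with second fundamental form II. Then the Gauss equation holds: R(X,Y,Z,W) = ⟨II(Y,W), II(X,Z)⟩ − ⟨II(X,W), II(Y,Z)⟩, where R is the Riemann curvature tensor of (M,g) with convention R(X,Y)Z = ∇_Y∇_X Z − ∇_X∇_Y Z + ∇_{[X,Y]}Z. -/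
/-
Algebraic (Koszul-style) model of a Riemannian manifold `(M,g)` equipped with a
virtual immersion `Ω : TM → V`:
* `C` is the ring of smooth functions on `M`,
* `VF` is the `C`-module of vector fields on `M`, with Lie `bracket` and
  derivation action `act : VF → C → C`,
* `g : VF → VF → C` is the Riemannian metric,
* `V` is the `C`-module of sections of the trivial bundle `M × V`, with the
  (pointwise) inner product `ip : V → V → C`,
* `Ω : VF →ₗ[C] V` is the virtual immersion (a `V`-valued one-form),
* `D : VF → V → V` is the flat connection on `M × V`,
* `tang : V →ₗ[C] VF` is the tangential part: it is characterized by
  `ip v (Ω Z) = g (tang v) Z`, so `Ω (tang v)` is the orthogonal projection of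
  `v` onto `Ω(TM)` and `v - Ω (tang v)` is the normal part of `v`.
-/

variable {C : Type*} [CommRing C]
variable {VF : Type*} [AddCommGroup VF] [Module C VF]
variable {V : Type*} [AddCommGroup V] [Module C V]

/-!
With `D_X (Ω Y) = Ω (∇_X Y) + II(X,Y)` and `II` normal, pairing `D_X D_Y (Ω Z)` with `Ω W`
gives `g (∇_X ∇_Y Z) W` plus a normal term; by metric compatibility of `D` that term is
`-⟨II(Y,Z), II(X,W)⟩` (Weingarten). Summing over the three terms of `R(X,Y)Z`, the ambient
parts assemble to `⟨D_Y D_X ΩZ - D_X D_Y ΩZ + D_[X,Y] ΩZ, ΩW⟩`, which vanishes because `D` is flat.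
-/

theorem map_sub_of_map_add {A B : Type*} [AddGroup A] [AddGroup B] {f : A → B}
    (hf : ∀ x y, f (x + y) = f x + f y) (x y : A) : f (x - y) = f x - f y :=
  (AddMonoidHom.mk' f hf).map_sub x y

theorem map_zero_of_map_add {A B : Type*} [AddGroup A] [AddGroup B] {f : A → B}
    (hf : ∀ x y, f (x + y) = f x + f y) : f 0 = 0 :=
  (AddMonoidHom.mk' f hf).map_zero

theorem ip_sub_left {R M : Type*} [AddGroup R] [AddGroup M] {ip : M → M → R}
    (hadd : ∀ u u' v, ip (u + u') v = ip u v + ip u' v) (u u' v : M) :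
    ip (u - u') v = ip u v - ip u' v :=
  map_sub_of_map_add (f := (ip · v)) (fun x y ↦ hadd x y v) u u'

section VirtualImmersion

variable {act : VF → C → C} {g : VF → VF → C} {ip : V → V → C}
  {Ω : VF →ₗ[C] V} {D : VF → V → V} {tang : V →ₗ[C] VF}

theorem D_Ω_eq_Ω_DT_add_II (X Y : VF) : D X (Ω Y) = Ω (DT Ω D tang X Y) + II Ω D tang X Y := by
  rw [DT, II, add_sub_cancel]

theorem g_DT (h_tang : ∀ v Z, ip v (Ω Z) = g (tang v) Z) (X Y W : VF) :
    g (DT Ω D tang X Y) W = ip (D X (Ω Y)) (Ω W) :=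
  (h_tang _ _).symm

theorem ip_II_Ω_eq_zero (h_ip_addl : ∀ u u' v, ip (u + u') v = ip u v + ip u' v)
    (h_tang : ∀ v Z, ip v (Ω Z) = g (tang v) Z) (ha : ∀ X Y, ip (Ω X) (Ω Y) = g X Y)
    (X Y W : VF) : ip (II Ω D tang X Y) (Ω W) = 0 := by
  rw [II, ip_sub_left h_ip_addl, h_tang, ha, sub_self]

/-- Weingarten's formula. -/
theorem ip_D_II_Ω_eq_neg (h_act_add : ∀ X (f f' : C), act X (f + f') = act X f + act X f')
    (h_ip_symm : ∀ u v, ip u v = ip v u)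
    (h_ip_addl : ∀ u u' v, ip (u + u') v = ip u v + ip u' v)
    (hD_ip : ∀ X u v, act X (ip u v) = ip (D X u) v + ip u (D X v))
    (h_tang : ∀ v Z, ip v (Ω Z) = g (tang v) Z) (ha : ∀ X Y, ip (Ω X) (Ω Y) = g X Y)
    (X Y Z W : VF) :
    ip (D X (II Ω D tang Y Z)) (Ω W) = - ip (II Ω D tang Y Z) (II Ω D tang X W) := by
  have hnormal := ip_II_Ω_eq_zero (D := D) h_ip_addl h_tang ha
  have hcompat := hD_ip X (II Ω D tang Y Z) (Ω W)
  have hsplit : ip (II Ω D tang Y Z) (D X (Ω W)) = ip (II Ω D tang Y Z) (II Ω D tang X W) := by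
    rw [D_Ω_eq_Ω_DT_add_II (Ω := Ω) (D := D) (tang := tang) X W, h_ip_symm, h_ip_addl,
      h_ip_symm (Ω _), hnormal, zero_add, h_ip_symm]
  rw [hnormal, map_zero_of_map_add (h_act_add X), hsplit] at hcompat
  linear_combination -hcompat

theorem g_DT_DT (h_act_add : ∀ X (f f' : C), act X (f + f') = act X f + act X f')
    (h_ip_symm : ∀ u v, ip u v = ip v u)
    (h_ip_addl : ∀ u u' v, ip (u + u') v = ip u v + ip u' v)
    (hD_addv : ∀ X u v, D X (u + v) = D X u + D X v)
    (hD_ip : ∀ X u v, act X (ip u v) = ip (D X u) v + ip u (D X v))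
    (h_tang : ∀ v Z, ip v (Ω Z) = g (tang v) Z) (ha : ∀ X Y, ip (Ω X) (Ω Y) = g X Y)
    (X Y Z W : VF) :
    g (DT Ω D tang X (DT Ω D tang Y Z)) W =
      ip (D X (D Y (Ω Z))) (Ω W) + ip (II Ω D tang Y Z) (II Ω D tang X W) := by
  rw [g_DT h_tang, eq_sub_of_add_eq (D_Ω_eq_Ω_DT_add_II Y Z).symm,
    map_sub_of_map_add (hD_addv X), ip_sub_left h_ip_addl,
    ip_D_II_Ω_eq_neg h_act_add h_ip_symm h_ip_addl hD_ip h_tang ha, sub_neg_eq_add]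

end VirtualImmersion

theorem stmt3_general
    (act : VF → C → C) (bracket : VF → VF → VF) (g : VF → VF → C) (ip : V → V → C)
    (Ω : VF →ₗ[C] V) (D : VF → V → V) (tang : V →ₗ[C] VF)
    (h_act_add : ∀ X (f f' : C), act X (f + f') = act X f + act X f')
    (h_g_addl : ∀ X X' Y, g (X + X') Y = g X Y + g X' Y)
    (h_ip_symm : ∀ u v, ip u v = ip v u)
    (h_ip_addl : ∀ u u' v, ip (u + u') v = ip u v + ip u' v)
    (hD_addv : ∀ X u v, D X (u + v) = D X u + D X v)
    (hD_flat : ∀ X Y v, D X (D Y v) - D Y (D X v) = D (bracket X Y) v)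
    (hD_ip : ∀ X u v, act X (ip u v) = ip (D X u) v + ip u (D X v))
    (h_tang : ∀ v Z, ip v (Ω Z) = g (tang v) Z)
    (ha : ∀ X Y, ip (Ω X) (Ω Y) = g X Y) :
    ∀ X Y Z W, g (Rcurv Ω D tang bracket X Y Z) W =
      ip (II Ω D tang Y W) (II Ω D tang X Z) - ip (II Ω D tang X W) (II Ω D tang Y Z) := by
  intro X Y Z W
  have hflat : ip (D X (D Y (Ω Z))) (Ω W) - ip (D Y (D X (Ω Z))) (Ω W) =
      ip (D (bracket X Y) (Ω Z)) (Ω W) := by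
    rw [← ip_sub_left h_ip_addl, hD_flat]
  rw [Rcurv, h_g_addl, map_sub_of_map_add (f := (g · W)) (fun A B ↦ h_g_addl A B W),
    g_DT_DT h_act_add h_ip_symm h_ip_addl hD_addv hD_ip h_tang ha,
    g_DT_DT h_act_add h_ip_symm h_ip_addl hD_addv hD_ip h_tang ha, g_DT h_tang,
    h_ip_symm (II Ω D tang Y W), h_ip_symm (II Ω D tang X W)]
  linear_combination -hflat

/-- Gauss' equation
`R(X,Y,Z,W) = ⟨II(Y,W), II(X,Z)⟩ - ⟨II(X,W), II(Y,Z)⟩` for a virtual immersion,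
with the convention `R(X,Y)Z = ∇_Y∇_X Z - ∇_X∇_Y Z + ∇_{[X,Y]}Z` and
`R(X,Y,Z,W) = g (R(X,Y)Z) W`. -/
theorem stmt3
    (act : VF → C → C) (bracket : VF → VF → VF) (g : VF → VF → C) (ip : V → V → C)
    (Ω : VF →ₗ[C] V) (D : VF → V → V) (tang : V →ₗ[C] VF)
    (h_act_add : ∀ X (f f' : C), act X (f + f') = act X f + act X f')
    (h_act_mul : ∀ X (f f' : C), act X (f * f') = f * act X f' + f' * act X f)
    (h_br_skew : ∀ X Y, bracket X Y = - bracket Y X)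
    (h_br_leib : ∀ X (f : C) Y, bracket X (f • Y) = act X f • Y + f • bracket X Y)
    (h_g_symm : ∀ X Y, g X Y = g Y X)
    (h_g_addl : ∀ X X' Y, g (X + X') Y = g X Y + g X' Y)
    (h_g_smull : ∀ (f : C) X Y, g (f • X) Y = f * g X Y)
    (h_g_nondeg : ∀ X, (∀ Y, g X Y = 0) → X = 0)
    (h_ip_symm : ∀ u v, ip u v = ip v u)
    (h_ip_addl : ∀ u u' v, ip (u + u') v = ip u v + ip u' v)
    (h_ip_smull : ∀ (f : C) u v, ip (f • u) v = f * ip u v)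
    (hD_addX : ∀ X X' v, D (X + X') v = D X v + D X' v)
    (hD_smulX : ∀ (f : C) X v, D (f • X) v = f • D X v)
    (hD_addv : ∀ X u v, D X (u + v) = D X u + D X v)
    (hD_leib : ∀ X (f : C) v, D X (f • v) = act X f • v + f • D X v)
    (hD_flat : ∀ X Y v, D X (D Y v) - D Y (D X v) = D (bracket X Y) v)
    (hD_ip : ∀ X u v, act X (ip u v) = ip (D X u) v + ip u (D X v))
    (h_tang : ∀ v Z, ip v (Ω Z) = g (tang v) Z)
    (ha : ∀ X Y, ip (Ω X) (Ω Y) = g X Y)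
    (hb : ∀ X Y Z, ip (D X (Ω Y) - D Y (Ω X) - Ω (bracket X Y)) (Ω Z) = 0) :
    ∀ X Y Z W, g (Rcurv Ω D tang bracket X Y Z) W =
      ip (II Ω D tang Y W) (II Ω D tang X Z) - ip (II Ω D tang X W) (II Ω D tang Y Z) :=
  stmt3_general act bracket g ip Ω D tang h_act_add h_g_addl h_ip_symm h_ip_addl hD_addv hD_flat
    hD_ip h_tang ha
end

section
/- Consider the unit sphere S^{n−1} ⊂ ℝ^n and the map Ω: TS^{n−1} → so(n) ≅ Λ²ℝ^n given by Ω(p,v) = p ∧ v (i.e., the skew-symmetric matrix pv^t − vp^t). Then Ω is a virtual immersion: ⟨Ω(p,v), Ω(p,w)⟩ = ⟨v,w⟩ for all p ∈ S^{n−1} and v,w ⊥ p (with the appropriately normalized inner product on Λ²ℝ^n), and ⟨dΩ(X,Y), Ω(Z)⟩ = 0 for all tangent vector fields X,Y,Z. -/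
open RealInnerProductSpace Matrix

/-- `x ∧ y ∈ Λ²ℝⁿ ≅ so(n)`, identified with the skew-symmetric matrix
`x yᵗ - y xᵗ`. -/
noncomputable def wedgeMat {n : ℕ} (x y : EuclideanSpace ℝ (Fin n)) :
    Matrix (Fin n) (Fin n) ℝ :=
  Matrix.vecMulVec x y - Matrix.vecMulVec y x

/-- The inner product on `Λ²ℝⁿ ≅ so(n)`, normalized so that
`⟨x∧y, u∧v⟩ = ⟨x,u⟩⟨y,v⟩ - ⟨x,v⟩⟨y,u⟩`. -/
noncomputable def ipMat {n : ℕ} (A B : Matrix (Fin n) (Fin n) ℝ) : ℝ :=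
  (1 / 2) * (Aᵀ * B).trace

theorem Matrix.trace_transpose_vecMulVec_mul_vecMulVec {ι R : Type*} [Fintype ι] [CommSemiring R]
    (a b c d : ι → R) :
    ((vecMulVec a b)ᵀ * vecMulVec c d).trace = (a ⬝ᵥ c) * (b ⬝ᵥ d) := by
  rw [transpose_vecMulVec, vecMulVec_mul_vecMulVec, trace_vecMulVec, dotProduct_smul, smul_eq_mul]

lemma ipMat_sub_left {n : ℕ} (A B C : Matrix (Fin n) (Fin n) ℝ) :
    ipMat (A - B) C = ipMat A C - ipMat B C := by
  rw [ipMat, ipMat, ipMat, transpose_sub, Matrix.sub_mul, trace_sub, mul_sub]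

lemma ipMat_wedgeMat {n : ℕ} (x y u v : EuclideanSpace ℝ (Fin n)) :
    ipMat (wedgeMat x y) (wedgeMat u v) = ⟪x, u⟫ * ⟪y, v⟫ - ⟪x, v⟫ * ⟪y, u⟫ := by
  simp only [ipMat, wedgeMat, transpose_sub, Matrix.sub_mul, Matrix.mul_sub, trace_sub,
    trace_transpose_vecMulVec_mul_vecMulVec, EuclideanSpace.inner_eq_star_dotProduct, star_trivial,
    dotProduct_comm (WithLp.ofLp u), dotProduct_comm (WithLp.ofLp v)]
  ring

/-- the map `Ω(p,v) = p ∧ v` on the unit sphere `S^{n-1} ⊂ ℝⁿ`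
is a virtual immersion:
(a) `⟨Ω(p,v), Ω(p,w)⟩ = ⟨v,w⟩` for `p` a unit vector and `v, w ⊥ p`;
(b) `⟨dΩ(X,Y), Ω(Z)⟩ = 0` for tangent vectors `X, Y, Z` at `p`.  (Pointwise,
for tangent vector fields `X, Y` extended to `ℝⁿ`, the Leibniz rule gives
`dΩ(X,Y)_p = D_X(Ω Y) - D_Y(Ω X) - Ω([X,Y]) = X_p ∧ Y_p - Y_p ∧ X_p`, since the
`p ∧ ·` terms combine into `p ∧ (∇ᵉ_X Y - ∇ᵉ_Y X - [X,Y]) = 0`.) -/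
theorem stmt11 {n : ℕ} :
    (∀ p v w : EuclideanSpace ℝ (Fin n), ‖p‖ = 1 →
      ⟪v, p⟫ = 0 → ⟪w, p⟫ = 0 →
      ipMat (wedgeMat p v) (wedgeMat p w) = ⟪v, w⟫) ∧
    (∀ p X Y Z : EuclideanSpace ℝ (Fin n), ‖p‖ = 1 →
      ⟪X, p⟫ = 0 → ⟪Y, p⟫ = 0 → ⟪Z, p⟫ = 0 →
      ipMat (wedgeMat X Y - wedgeMat Y X) (wedgeMat p Z) = 0) := by
  constructor
  · intro p v w hp hv _
    rw [ipMat_wedgeMat, real_inner_self_eq_norm_sq, hp, hv]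
    ring
  · intro p X Y Z _ hX hY _
    rw [ipMat_sub_left, ipMat_wedgeMat, ipMat_wedgeMat, hX, hY]
    ring
end
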